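/- Let V be a finite-dimensional complex vector space, S semisimple and N nilpotent endomorphisms of V with [S,N] = 0, and T = exp(2πi(S+N)). If the eigenvalues of S lie in the half-open interval (α−1, α] for some real α, then the pair (S,N) is uniquely determined by T: namely S is determined by the eigenvalues of T (each eigenvalue of T has the form e^{2πiβ} for a unique β ∈ (α−1, α], and S acts by β on the corresponding generalized eigenspace of T), and N = (1/2πi)·log of the unipotent part of T. -/

import Mathlib

/-!
On an eigenspace of `S` with eigenvalue `μ`, the commuting nilpotent `N` makes
`T = exp (2πi (S + N))` equal to `e^{2πiμ}` times a unipotent operator, so every eigenspace of `S`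
lies in a generalized eigenspace of `T`. The map `μ ↦ e^{2πiμ}` is injective on `(α - 1, α]`, the
generalized eigenspaces of `T` are independent and the eigenspaces of `S` span, so these inclusions
are equalities and `S` is read off from `T`. Then `exp (2πi N) = exp (-2πi S) T` is determined, and
`exp` is injective on nilpotent matrices: `k ↦ exp (k A)` is a polynomial in `k` whose linear
coefficient is `A`, and it is determined by its values `exp (A) ^ k` at the natural numbers.
-/

open NormedSpace Finset Set Real Complex Module.End
open scoped Nat

theorem iSupIndep.eq_of_le_of_iSup_eq_top {ι κ L : Type*} [CompleteLattice L]
    [IsModularLattice L] {G : κ → L} (hG : iSupIndep G) {P : Set ι} {z : ι → κ}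
    (hz : InjOn z P) {E : ι → L} (hE : ∀ i ∈ P, E i ≤ G (z i)) (htop : ⨆ i ∈ P, E i = ⊤)
    {i : ι} (hi : i ∈ P) : E i = G (z i) := by
  set R := ⨆ j ∈ P \ {i}, E j
  have hcover : G (z i) ≤ E i ⊔ R := by
    refine le_top.trans (htop ▸ iSup₂_le fun j hj ↦ ?_)
    by_cases hji : j = i
    · exact hji ▸ le_sup_left
    · exact le_sup_of_le_right (le_biSup E ⟨hj, hji⟩)
  have hdisj : R ⊓ G (z i) = ⊥ := by
    refine ((hG (z i)).mono_right (iSup₂_le fun j hj ↦ (hE j hj.1).trans ?_)).symm.eq_bot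
    exact le_biSup G fun h ↦ hj.2 (hz hj.1 hi h)
  calc E i = E i ⊔ R ⊓ G (z i) := by rw [hdisj, sup_bot_eq]
    _ = (E i ⊔ R) ⊓ G (z i) := (sup_inf_assoc_of_le R (hE i hi)).symm
    _ = G (z i) := inf_eq_right.2 hcover

theorem Module.End.eq_of_eigenspace_le {R M ι : Type*} [CommRing R] [AddCommGroup M]
    [Module R M] {f g : Module.End R M} {P : Set ι} {μ : ι → R}
    (htop : ⨆ i ∈ P, f.eigenspace (μ i) = ⊤)
    (hle : ∀ i ∈ P, f.eigenspace (μ i) ≤ g.eigenspace (μ i)) : f = g := by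
  refine sub_eq_zero.1 (LinearMap.ker_eq_top.1 (eq_top_iff.2 ?_))
  refine htop ▸ iSup₂_le fun i hi x hx ↦ ?_
  rw [LinearMap.mem_ker, LinearMap.sub_apply, mem_eigenspace_iff.1 hx,
    mem_eigenspace_iff.1 (hle i hi hx), sub_self]

theorem IsNilpotent.maxGenEigenspace_zero_eq_top {R M : Type*} [CommRing R] [AddCommGroup M]
    [Module R M] {f : Module.End R M} (hf : IsNilpotent f) : f.maxGenEigenspace 0 = ⊤ := by
  obtain ⟨k, hk⟩ := hf
  exact eq_top_iff.2 fun x _ ↦ (mem_maxGenEigenspace f 0 x).2 ⟨k, by simp [hk]⟩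

theorem IsNilpotent.exp_nsmul {A : Type*} [Ring A] [Module ℚ A] {a : A} (ha : IsNilpotent a)
    (k : ℕ) : IsNilpotent.exp (k • a) = IsNilpotent.exp a ^ k := by
  induction k with
  | zero => simp
  | succ k ih =>
    rw [succ_nsmul, exp_add_of_commute ((Commute.refl a).smul_left k) (ha.smul k) ha, ih,
      _root_.pow_succ]

theorem NormedSpace.exp_eq_isNilpotent_exp {𝔸 : Type*} [Ring 𝔸] [Algebra ℚ 𝔸]
    [TopologicalSpace 𝔸] [IsTopologicalRing 𝔸] {a : 𝔸} (ha : IsNilpotent a) :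
    exp a = IsNilpotent.exp a := by
  obtain ⟨k, hk⟩ := ha
  rw [exp_eq_tsum_rat, IsNilpotent.exp_eq_sum hk]
  exact tsum_eq_sum fun i hi ↦ by
    rw [pow_eq_zero_of_le (by simpa using hi) hk, smul_zero]

theorem Complex.injOn_exp_two_pi_mul_I_mul_Ioc (α : ℝ) :
    InjOn (fun μ : ℝ ↦ Complex.exp (((2 * π : ℝ) : ℂ) * I * μ)) (Ioc (α - 1) α) := by
  have hmaps : MapsTo (2 * π * ·) (Ioc (α - 1) α) (Ioc (2 * π * (α - 1)) (2 * π * α)) :=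
    fun μ hμ ↦
      ⟨mul_lt_mul_of_pos_left hμ.1 two_pi_pos, mul_le_mul_of_nonneg_left hμ.2 two_pi_pos.le⟩
  have hinj := (Circle.exp_injOn_Ioc (le_of_eq (by ring))).comp
    (mul_right_injective₀ two_pi_pos.ne').injOn hmaps
  intro μ hμ ν hν h
  refine hinj hμ hν (Subtype.ext ?_)
  simpa [Circle.coe_exp, mul_comm, mul_left_comm] using h

namespace Matrix

variable {ι : Type*} [Fintype ι] [DecidableEq ι]

theorem exp_mulVec_eq_self_of_mulVec_eq_zero {A : Matrix ι ι ℂ} {x : ι → ℂ}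
    (hx : A *ᵥ x = 0) : exp A *ᵥ x = x := by
  let := Matrix.linftyOpNormedRing (n := ι) (α := ℂ)
  let := Matrix.linftyOpNormedAlgebra (n := ι) (R := ℂ) (α := ℂ)
  refine ((exp_series_hasSum_exp' (𝕂 := ℂ) A).map (mulVec.addMonoidHomLeft x)
    (continuous_id.matrix_mulVec continuous_const)).unique ?_
  convert hasSum_ite_eq 0 x with i
  simp only [Function.comp_apply, mulVec.addMonoidHomLeft, AddMonoidHom.coe_mk, ZeroHom.coe_mk]
  rcases i with _ | i
  · simp
  · rw [if_neg i.succ_ne_zero, pow_succ, smul_mulVec, ← mulVec_mulVec, hx, mulVec_zero,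
      smul_zero]

theorem exp_mulVec_eq_of_mulVec_eq_smul {A : Matrix ι ι ℂ} {x : ι → ℂ} {μ : ℂ}
    (hx : A *ᵥ x = μ • x) : exp A *ᵥ x = Complex.exp μ • x := by
  have hsplit : A = μ • 1 + (A - μ • 1) := by abel
  have hcomm : Commute (μ • 1 : Matrix ι ι ℂ) (A - μ • 1) := (Commute.one_left _).smul_left μ
  have hscalar : exp (μ • 1 : Matrix ι ι ℂ) = Complex.exp μ • 1 := by
    rw [← Algebra.algebraMap_eq_smul_one, ← Algebra.algebraMap_eq_smul_one, Complex.exp_eq_exp_ℂ]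
    let := Matrix.linftyOpNormedRing (n := ι) (α := ℂ)
    let := Matrix.linftyOpNormedAlgebra (n := ι) (R := ℂ) (α := ℂ)
    exact (algebraMap_exp_comm μ).symm
  rw [hsplit, exp_add_of_commute _ _ hcomm, hscalar, smul_mul_assoc, one_mul, smul_mulVec,
    exp_mulVec_eq_self_of_mulVec_eq_zero (by rw [sub_mulVec, hx, smul_mulVec, one_mulVec,
      sub_self])]

theorem eigenspace_le_maxGenEigenspace_exp_add {S N : Matrix ι ι ℂ} (hSN : Commute S N)
    (hN : IsNilpotent N) (μ : ℂ) :
    eigenspace (toLin' S) μ ≤ maxGenEigenspace (toLin' (exp (S + N))) (Complex.exp μ) := by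
  set U := exp S * (exp N - 1) with hU_def
  have hsplit : exp (S + N) = exp S + U := by
    rw [exp_add_of_commute _ _ hSN, hU_def, mul_sub_one, add_sub_cancel]
  have hexpS : eigenspace (toLin' S) μ ≤ eigenspace (toLin' (exp S)) (Complex.exp μ) :=
    fun x hx ↦ by
      rw [mem_eigenspace_iff, toLin'_apply] at hx ⊢
      exact exp_mulVec_eq_of_mulVec_eq_smul hx
  have hU : IsNilpotent (toLin' U) := by
    refine IsNilpotent.map ?_ (toLinAlgEquiv' (R := ℂ) (n := ι))
    refine (hSN.exp.sub_right (Commute.one_right _)).isNilpotent_mul_left ?_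
    rw [exp_eq_isNilpotent_exp hN]
    exact IsNilpotent.isNilpotent_exp_sub_one hN
  have hcomm : Commute (toLin' (exp S)) (toLin' U) :=
    ((Commute.refl _).mul_right (hSN.exp.sub_right (Commute.one_right _))).map
      (toLinAlgEquiv' (R := ℂ) (n := ι))
  calc eigenspace (toLin' S) μ
      ≤ eigenspace (toLin' (exp S)) (Complex.exp μ) ⊓ maxGenEigenspace (toLin' U) 0 := by
        rwa [hU.maxGenEigenspace_zero_eq_top, inf_top_eq]
    _ ≤ _ := genEigenspace_inf_le_add _ _ _ _ _ _ hcomm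
    _ = _ := by rw [hsplit, map_add toLin', add_zero, add_top]

theorem eigenspace_eq_maxGenEigenspace_exp {S N : Matrix ι ι ℂ} (hSN : Commute S N)
    (hN : IsNilpotent N) {α : ℝ}
    (hS : ⨆ μ ∈ Ioc (α - 1) α, eigenspace (toLin' S) (μ : ℂ) = ⊤) {μ : ℝ}
    (hμ : μ ∈ Ioc (α - 1) α) :
    eigenspace (toLin' S) μ = maxGenEigenspace (toLin' (exp ((((2 * π : ℝ) : ℂ) * I) • (S + N))))
      (Complex.exp (((2 * π : ℝ) : ℂ) * I * μ)) := by
  set c : ℂ := ((2 * π : ℝ) : ℂ) * I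
  refine (independent_maxGenEigenspace _).eq_of_le_of_iSup_eq_top
    (injOn_exp_two_pi_mul_I_mul_Ioc α) (fun ν _ ↦ ?_) hS hμ
  calc eigenspace (toLin' S) ν ≤ eigenspace (toLin' (c • S)) (c * ν) := by
        rw [map_smul]; exact genEigenspace_le_smul _ _ _ _
    _ ≤ _ := by
      rw [smul_add]
      exact eigenspace_le_maxGenEigenspace_exp_add ((hSN.smul_left c).smul_right c) (hN.smul c) _

theorem eq_of_isNilpotent_exp_eq {K : Type*} [Field K] [CharZero K] {A B : Matrix ι ι K}
    (hA : IsNilpotent A) (hB : IsNilpotent B) (h : IsNilpotent.exp A = IsNilpotent.exp B) :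
    A = B := by
  obtain ⟨p, hp⟩ := hA
  obtain ⟨q, hq⟩ := hB
  -- `2 ≤ m`, so that the linear coefficient of `P` below is `A j l - B j l`
  set m := p + q + 2
  have hexp (C : Matrix ι ι K) {r : ℕ} (hC : C ^ r = 0) (hr : r ≤ m) (k : ℕ) :
      IsNilpotent.exp C ^ k = ∑ i ∈ range m, ((k : K) ^ i * (i ! : K)⁻¹) • C ^ i := by
    have hCm : C ^ m = 0 := pow_eq_zero_of_le hr hC
    rw [← IsNilpotent.exp_nsmul ⟨r, hC⟩, IsNilpotent.exp_eq_sum (k := m)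
      (by rw [smul_pow, hCm, smul_zero])]
    refine sum_congr rfl fun i _ ↦ ?_
    rw [smul_pow, ← Nat.cast_smul_eq_nsmul K, inv_natCast_smul_eq ℚ K, smul_smul, mul_comm,
      Nat.cast_pow]
  ext j l
  let P : Polynomial K :=
    ∑ i ∈ range m, Polynomial.C ((i ! : K)⁻¹ * (A ^ i - B ^ i) j l) * Polynomial.X ^ i
  have hP : P = 0 := by
    refine P.eq_zero_of_infinite_isRoot
      ((Set.infinite_range_of_injective Nat.cast_injective).mono ?_)
    rintro - ⟨k, rfl⟩
    have hk := congr_fun₂ ((hexp A hp (by omega) k).symm.trans (h ▸ hexp B hq (by omega) k)) j l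
    simp only [sum_apply, smul_apply, smul_eq_mul] at hk
    rw [← sub_eq_zero, ← sum_sub_distrib] at hk
    simp only [Set.mem_ofPred_eq, Polynomial.IsRoot, P, Polynomial.eval_finsetSum,
      Polynomial.eval_mul, Polynomial.eval_C, Polynomial.eval_pow, Polynomial.eval_X, ← hk]
    exact sum_congr rfl fun i _ ↦ by rw [sub_apply]; ring
  have hcoeff := congr_arg (Polynomial.coeff · 1) hP
  simp only [P, Polynomial.finsetSum_coeff, Polynomial.coeff_C_mul_X_pow] at hcoeff
  simpa [m, sub_eq_zero] using hcoeff

end Matrix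

open Matrix

/-- if `T = exp(2πi(S+N))` with `S` diagonalizable with (real) eigenvalues in
`(α-1, α]`, `N` nilpotent and `[S,N] = 0`, then the pair `(S, N)` is uniquely determined
by `T`. -/
theorem stmt7 (n : ℕ) (α : ℝ) (S N S' N' : Matrix (Fin n) (Fin n) ℂ)
    (hSN : Commute S N) (hSN' : Commute S' N')
    (hN : IsNilpotent N) (hN' : IsNilpotent N')
    (hS : (⨆ μ : ℝ, ⨆ _ : μ ∈ Set.Ioc (α - 1) α,
      Module.End.eigenspace (Matrix.toLin' S) (μ : ℂ)) = ⊤)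
    (hS' : (⨆ μ : ℝ, ⨆ _ : μ ∈ Set.Ioc (α - 1) α,
      Module.End.eigenspace (Matrix.toLin' S') (μ : ℂ)) = ⊤)
    (hT : NormedSpace.exp (((2 * Real.pi : ℝ) * Complex.I) • (S + N))
        = NormedSpace.exp (((2 * Real.pi : ℝ) * Complex.I) • (S' + N'))) :
    S = S' ∧ N = N' := by
  set c : ℂ := ((2 * π : ℝ) : ℂ) * I
  have hSS : S = S' := toLin'.injective <| eq_of_eigenspace_le hS fun μ hμ ↦ by
    rw [eigenspace_eq_maxGenEigenspace_exp hSN hN hS hμ, hT,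
      eigenspace_eq_maxGenEigenspace_exp hSN' hN' hS' hμ]
  subst hSS
  refine ⟨rfl, ?_⟩
  have hexpN : exp (c • N) = exp (c • N') := by
    rw [smul_add, smul_add, exp_add_of_commute _ _ ((hSN.smul_left c).smul_right c),
      exp_add_of_commute _ _ ((hSN'.smul_left c).smul_right c)] at hT
    exact (Matrix.isUnit_exp _).mul_left_cancel hT
  rw [exp_eq_isNilpotent_exp (hN.smul c), exp_eq_isNilpotent_exp (hN'.smul c)] at hexpN
  exact smul_right_injective _ (by simp [c, pi_ne_zero])
    (eq_of_isNilpotent_exp_eq (hN.smul c) (hN'.smul c) hexpN)
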